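/- Let Q ⊆ ℍ be an ℝ-subspace with 1 ∈ Q, let U ⊆ ℍⁿ be a totally real ℝ-subspace with ⟨f₂, u⟩ = 0 for every u ∈ U (where f₂ is the second standard basis vector of ℍⁿ), and let Θ : Q → U be an ℝ-linear map satisfying Re⟨Θ(q), Θ(q')⟩ = Re(conj(q)·q') for all q, q' ∈ Q (an ℝ-linear isometry). Then m' := {q·E₂₂ + 2·ι₊(Θ(q)) : q ∈ Q} is a Lie triple system of m. (These are the Lie triple systems of type (P, φ=arctan(1/2), τ) with dim(τ) = 1; for Q = ℍ and Q 3-dimensional, these give totally geodesic ℍP¹ resp. S³ submanifolds missing from Chen–Nagano's classification.) -/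

import Mathlib

open Matrix

noncomputable section

/-- The quaternions. -/
abbrev ℍq : Type := Quaternion ℝ

/-- The tangent space `m` of `G₂(ℍ^{n+2})`: the `n × 2` quaternionic matrices. -/
abbrev MatH (n : ℕ) : Type := Matrix (Fin n) (Fin 2) ℍq

/-- The curvature tensor of `G₂(ℍ^{n+2})`:
`R(u,v)w = (u vᴴ − v uᴴ) w + w (vᴴ u − uᴴ v)`. -/
def Rcurv {n : ℕ} (u v w : MatH n) : MatH n :=
  (u * vᴴ - v * uᴴ) * w + w * (vᴴ * u - uᴴ * v)

/-- A subset of `m` is a Lie triple system if it is a real-linear subspace which is closed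
under the curvature tensor. -/
def IsLTS {n : ℕ} (s : Set (MatH n)) : Prop :=
  (∃ p : Submodule ℝ (MatH n), (p : Set (MatH n)) = s) ∧
    ∀ u ∈ s, ∀ v ∈ s, ∀ w ∈ s, Rcurv u v w ∈ s

/-- The first row index (row "1" in the paper's 1-based notation). -/
def r0 {n : ℕ} (hn : 2 ≤ n) : Fin n := ⟨0, by omega⟩

/-- The second row index (row "2" in the paper's 1-based notation). -/
def r1 {n : ℕ} (hn : 2 ≤ n) : Fin n := ⟨1, by omega⟩

/-- `q·E₁₁`: the matrix whose only nonzero entry is `q`, in position (1,1). -/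
def E11 {n : ℕ} (hn : 2 ≤ n) (q : ℍq) : MatH n := Matrix.single (r0 hn) 0 q

/-- `q·E₂₂`: the matrix whose only nonzero entry is `q`, in position (2,2). -/
def E22 {n : ℕ} (hn : 2 ≤ n) (q : ℍq) : MatH n := Matrix.single (r1 hn) 1 q

/-- `H₊ = E₁₁`. -/
def Hp {n : ℕ} (hn : 2 ≤ n) : MatH n := E11 hn 1

/-- `H₋ = E₂₂`. -/
def Hm {n : ℕ} (hn : 2 ≤ n) : MatH n := E22 hn 1

/-- The matrix `M_{c,ε}`: entry `(2,1)` equals `c/√2`, entry `(1,2)` equals `ε·conj(c)/√2`,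
all other entries vanish. -/
def Mce {n : ℕ} (hn : 2 ≤ n) (c : ℍq) (ε : ℝ) : MatH n :=
  Matrix.single (r1 hn) 0 ((Real.sqrt 2)⁻¹ • c) +
    Matrix.single (r0 hn) 1 ((ε * (Real.sqrt 2)⁻¹) • star c)

/-- The quaternionic inner product `⟨v,w⟩ = trace (vᴴ w)` on `m`. -/
def qip {n : ℕ} (v w : MatH n) : ℍq := Matrix.trace (vᴴ * w)

/-- The norm on `m`: `‖v‖ = √(Σ |v i j|²)`. -/
def hnorm {n : ℕ} (v : MatH n) : ℝ := Real.sqrt (∑ i, ∑ j, Quaternion.normSq (v i j))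

/-- The symplectic group `Sp(k)` of quaternionic `k × k` matrices. -/
def SpH (k : ℕ) : Set (Matrix (Fin k) (Fin k) ℍq) := {B | Bᴴ * B = 1}

/-- The `j`-th column of a matrix in `m`. -/
def col {n : ℕ} (j : Fin 2) (v : MatH n) : Fin n → ℍq := fun i => v i j

/-- The quaternionic inner product `⟨a,b⟩ = Σᵢ conj(aᵢ)·bᵢ` on `ℍⁿ`. -/
def vip {n : ℕ} (a b : Fin n → ℍq) : ℍq := ∑ i, star (a i) * b i

/-- The imaginary part `Im(q) = (q - conj q)/2` of a quaternion. -/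
def imPart (q : ℍq) : ℍq := (q - star q) / 2

/-- Componentwise right multiplication of a vector by a quaternion. -/
def rightMulV {n : ℕ} (u : Fin n → ℍq) (c : ℍq) : Fin n → ℍq := fun i => u i * c

end

noncomputable section

/-- `U ⊆ ℍⁿ` is quaternionic: stable under right multiplication by all quaternions. -/
def IsQuatSub {n : ℕ} (U : Submodule ℝ (Fin n → ℍq)) : Prop :=
  ∀ u ∈ U, ∀ c : ℍq, rightMulV u c ∈ U

/-- `U ⊆ ℍⁿ` is totally complex with respect to some unit imaginary quaternion `i`:
`U·i ⊆ U` and `U·j ⟂ U` for every unit imaginary quaternion `j` orthogonal to `i`. -/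
def IsTotCplx {n : ℕ} (U : Submodule ℝ (Fin n → ℍq)) : Prop :=
  ∃ i : ℍq, i.re = 0 ∧ Quaternion.normSq i = 1 ∧ (∀ u ∈ U, rightMulV u i ∈ U) ∧
    ∀ j : ℍq, j.re = 0 → Quaternion.normSq j = 1 → (star i * j).re = 0 →
      ∀ u ∈ U, ∀ u' ∈ U, (vip (rightMulV u j) u').re = 0

/-- `U ⊆ ℍⁿ` is totally real: `U·c ⟂ U` for every imaginary quaternion `c`. -/
def IsTotReal {n : ℕ} (U : Submodule ℝ (Fin n → ℍq)) : Prop :=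
  ∀ c : ℍq, c.re = 0 → ∀ u ∈ U, ∀ u' ∈ U, (vip (rightMulV u c) u').re = 0

/-- `U ⊆ ℍⁿ` is of type `(S³)`: a real-3-dimensional subspace of a quaternionic line. -/
def IsS3 {n : ℕ} (U : Submodule ℝ (Fin n → ℍq)) : Prop :=
  ∃ u₀ : Fin n → ℍq, (∀ u ∈ U, ∃ c : ℍq, u = rightMulV u₀ c) ∧
    Module.finrank ℝ ↥U = 3

/-- `U` is of `ℍP`-type: quaternionic, totally complex, totally real, or of type `(S³)`. -/
def IsHPType {n : ℕ} (U : Submodule ℝ (Fin n → ℍq)) : Prop :=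
  IsQuatSub U ∨ IsTotCplx U ∨ IsTotReal U ∨ IsS3 U

end

noncomputable section

/-- `ι₊(u)`: the matrix with first column `u` and second column `0`. -/
def iotaPlus {n : ℕ} (u : Fin n → ℍq) : MatH n :=
  Matrix.of fun i j => if j = 0 then u i else 0

/-! Write `P(q, u) = q·E₂₂ + 2·ι₊(u)`. For `u` vanishing in row 2 the products `P(b, β)ᴴ P(a, α)`
are diagonal, `diag(4⟨β, α⟩, b̄a)`, so the curvature tensor acts on the two blocks separately.
On the `E₂₂` entry it is the curvature tensor of the round `ℍ`:
`(ab̄ − bā)c + c(b̄a − āb) = 4 Re(b̄c) a − 4 Re(āc) b`. On the first column it is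
`4(α⟨β,γ⟩ − β⟨α,γ⟩ + γ(⟨β,α⟩ − ⟨α,β⟩))`, and the factor `2` in front of `ι₊` is what makes both
blocks carry the same `4`. Total reality makes the inner products `⟨Θa, Θb⟩` real, the isometry
turns them into `Re(āb)`, and so `R(P a, P b) P c = P(d)` with `d = 4 Re(b̄c) a − 4 Re(āc) b ∈ Q`. -/

theorem Quaternion.curv_eq_smul_sub_smul (a b c : ℍq) :
    (a * star b - b * star a) * c + c * (star b * a - star a * b)
      = (4 * (star b * c).re) • a - (4 * (star a * c).re) • b := by
  ext <;> simp [Quaternion.re_mul, Quaternion.imI_mul, Quaternion.imJ_mul,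
    Quaternion.imK_mul] <;> ring

theorem Quaternion.re_star_mul_comm (a b : ℍq) : (star a * b).re = (star b * a).re := by
  simp only [Quaternion.re_mul, Quaternion.re_star, Quaternion.imI_star, Quaternion.imJ_star,
    Quaternion.imK_star]
  ring

section Vectors

variable {n : ℕ}

theorem vip_rightMulV_left (u u' : Fin n → ℍq) (c : ℍq) :
    vip (rightMulV u c) u' = star c * vip u u' := by
  simp [vip, rightMulV, Finset.mul_sum, mul_assoc]

theorem rightMulV_coe (u : Fin n → ℍq) (r : ℝ) : rightMulV u (r : ℍq) = r • u := by
  ext i : 1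
  simp [rightMulV, Quaternion.mul_coe_eq_smul]

theorem rightMulV_smul (u : Fin n → ℍq) (r : ℝ) (c : ℍq) :
    rightMulV u (r • c) = r • rightMulV u c := by
  ext i : 1
  simp [rightMulV]

theorem vip_ite_one_left (i : Fin n) (u : Fin n → ℍq) :
    vip (fun j => if j = i then 1 else 0) u = u i := by
  simp [vip, apply_ite (star : ℍq → ℍq), ite_mul]

theorem IsTotReal.vip_eq_re {U : Submodule ℝ (Fin n → ℍq)} (hU : IsTotReal U)
    {u u' : Fin n → ℍq} (hu : u ∈ U) (hu' : u' ∈ U) : vip u u' = ((vip u u').re : ℍq) := by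
  have h c (hc : c.re = 0) : (star c * vip u u').re = 0 := by
    rw [← vip_rightMulV_left]; exact hU c hc u hu u' hu'
  simp only [Quaternion.re_mul, Quaternion.re_star, Quaternion.imI_star, Quaternion.imJ_star,
    Quaternion.imK_star] at h
  have hi := h ⟨0, 1, 0, 0⟩ rfl
  have hj := h ⟨0, 0, 1, 0⟩ rfl
  have hk := h ⟨0, 0, 0, 1⟩ rfl
  ext <;> simp_all

end Vectors

section Matrices

variable {n : ℕ} (hn : 2 ≤ n)

def e22AddIotaPlus : ℍq × (Fin n → ℍq) →ₗ[ℝ] MatH n where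
  toFun p := E22 hn p.1 + (2 : ℝ) • iotaPlus p.2
  map_add' p p' := by
    refine Matrix.ext fun i j => ?_
    fin_cases j <;> simp [E22, iotaPlus, Matrix.single_apply, ite_add_zero]
  map_smul' r p := by
    refine Matrix.ext fun i j => ?_
    fin_cases j <;> simp [E22, iotaPlus, Matrix.single_apply, smul_comm r (2 : ℝ)]

theorem e22AddIotaPlus_apply (q : ℍq) (u : Fin n → ℍq) :
    e22AddIotaPlus hn (q, u) = E22 hn q + (2 : ℝ) • iotaPlus u := rfl

theorem conjTranspose_e22AddIotaPlus_mul {a b : ℍq} {α β : Fin n → ℍq}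
    (hα : α (r1 hn) = 0) (hβ : β (r1 hn) = 0) :
    (e22AddIotaPlus hn (b, β))ᴴ * e22AddIotaPlus hn (a, α) =
      diagonal ![(4 : ℝ) • vip β α, star b * a] := by
  refine Matrix.ext fun i j => ?_
  fin_cases i <;> fin_cases j <;>
    norm_num [e22AddIotaPlus_apply, E22, iotaPlus, Matrix.mul_apply, Matrix.single_apply, vip, hα,
      hβ, Finset.smul_sum, smul_smul]

theorem e22AddIotaPlus_mul_diagonal (c x y : ℍq) (γ : Fin n → ℍq) :
    e22AddIotaPlus hn (c, γ) * diagonal ![x, y] = e22AddIotaPlus hn (c * y, rightMulV γ x) := by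
  refine Matrix.ext fun i j => ?_
  fin_cases j <;> simp [e22AddIotaPlus_apply, E22, iotaPlus, Matrix.single_apply, rightMulV]

theorem rcurv_e22AddIotaPlus {a b c : ℍq} {α β γ : Fin n → ℍq}
    (hα : α (r1 hn) = 0) (hβ : β (r1 hn) = 0) (hγ : γ (r1 hn) = 0) :
    Rcurv (e22AddIotaPlus hn (a, α)) (e22AddIotaPlus hn (b, β)) (e22AddIotaPlus hn (c, γ)) =
      e22AddIotaPlus hn ((a * star b - b * star a) * c + c * (star b * a - star a * b),
        (4 : ℝ) • (rightMulV α (vip β γ) - rightMulV β (vip α γ) +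
          (rightMulV γ (vip β α) - rightMulV γ (vip α β)))) := by
  rw [Rcurv, Matrix.sub_mul, Matrix.mul_sub, Matrix.mul_assoc, Matrix.mul_assoc,
    conjTranspose_e22AddIotaPlus_mul hn hγ hβ, conjTranspose_e22AddIotaPlus_mul hn hγ hα,
    conjTranspose_e22AddIotaPlus_mul hn hα hβ, conjTranspose_e22AddIotaPlus_mul hn hβ hα,
    e22AddIotaPlus_mul_diagonal, e22AddIotaPlus_mul_diagonal, e22AddIotaPlus_mul_diagonal,
    e22AddIotaPlus_mul_diagonal, ← map_sub, ← map_sub, ← map_add]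
  congr 1
  refine Prod.ext ?_ ?_
  · simp only [Prod.fst_add, Prod.fst_sub]
    noncomm_ring
  · simp only [Prod.snd_add, Prod.snd_sub, rightMulV_smul, smul_sub, smul_add]

end Matrices

section Graph

variable {n : ℕ} (hn : 2 ≤ n) {Q : Submodule ℝ ℍq} (Θ : ↥Q →ₗ[ℝ] (Fin n → ℍq))

def graphE22 : ↥Q →ₗ[ℝ] MatH n := (e22AddIotaPlus hn).comp (Q.subtype.prod Θ)

theorem graphE22_apply (q : ↥Q) : graphE22 hn Θ q = e22AddIotaPlus hn (q, Θ q) := rfl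

theorem rcurv_graphE22 (hvanish : ∀ q, Θ q (r1 hn) = 0)
    (hvip : ∀ q q', vip (Θ q) (Θ q') = ((star (q : ℍq) * q').re : ℍq)) (a b c : ↥Q) :
    Rcurv (graphE22 hn Θ a) (graphE22 hn Θ b) (graphE22 hn Θ c) =
      graphE22 hn Θ ((4 * (star (b : ℍq) * c).re) • a - (4 * (star (a : ℍq) * c).re) • b) := by
  simp only [graphE22_apply]
  rw [rcurv_e22AddIotaPlus hn (hvanish a) (hvanish b) (hvanish c), hvip, hvip, hvip, hvip,
    Quaternion.curv_eq_smul_sub_smul, Quaternion.re_star_mul_comm b a, sub_self, add_zero,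
    rightMulV_coe, rightMulV_coe, map_sub, map_smul, map_smul, smul_sub, smul_smul, smul_smul]
  rfl

end Graph

theorem stmt18_general (n : ℕ) (hn : 2 ≤ n) (Q : Submodule ℝ ℍq)
    (U : Submodule ℝ (Fin n → ℍq)) (hU : IsTotReal U)
    (hUorth : ∀ u ∈ U, vip (fun i => if i = r1 hn then 1 else 0) u = 0)
    (Θ : ↥Q →ₗ[ℝ] (Fin n → ℍq)) (hrange : ∀ q : ↥Q, Θ q ∈ U)
    (hisom : ∀ q q' : ↥Q, (vip (Θ q) (Θ q')).re = (star (q : ℍq) * (q' : ℍq)).re) :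
    IsLTS {v : MatH n | ∃ q : ↥Q, v = E22 hn (q : ℍq) + (2 : ℝ) • iotaPlus (Θ q)} := by
  have hvanish (q : Q) : Θ q (r1 hn) = 0 := by
    simpa [vip_ite_one_left] using hUorth _ (hrange q)
  have hvip (q q' : Q) : vip (Θ q) (Θ q') = ((star (q : ℍq) * q').re : ℍq) := by
    rw [hU.vip_eq_re (hrange q) (hrange q'), hisom]
  have hset : {v : MatH n | ∃ q : ↥Q, v = E22 hn (q : ℍq) + (2 : ℝ) • iotaPlus (Θ q)} =
      LinearMap.range (graphE22 hn Θ) := by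
    ext v
    simp [eq_comm, graphE22_apply, e22AddIotaPlus_apply]
  rw [hset]
  refine ⟨⟨_, rfl⟩, ?_⟩
  rintro _ ⟨a, rfl⟩ _ ⟨b, rfl⟩ _ ⟨c, rfl⟩
  exact ⟨_, (rcurv_graphE22 hn Θ hvanish hvip a b c).symm⟩

/-- The Lie triple systems of type `(P, φ=arctan(1/2), τ)` with `dim(τ) = 1`:
for a real subspace `Q ⊆ ℍ` with `1 ∈ Q`, a totally real subspace `U ⊆ ℍⁿ` orthogonal to
the second standard basis vector, and an `ℝ`-linear isometry `Θ : Q → U`, the set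
`{q·E₂₂ + 2·ι₊(Θ(q)) : q ∈ Q}` is a Lie triple system of `m`. -/
theorem stmt18 (n : ℕ) (hn : 2 ≤ n) (Q : Submodule ℝ ℍq) (h1 : (1 : ℍq) ∈ Q)
    (U : Submodule ℝ (Fin n → ℍq)) (hU : IsTotReal U)
    (hUorth : ∀ u ∈ U, vip (fun i => if i = r1 hn then 1 else 0) u = 0)
    (Θ : ↥Q →ₗ[ℝ] (Fin n → ℍq)) (hrange : ∀ q : ↥Q, Θ q ∈ U)
    (hisom : ∀ q q' : ↥Q, (vip (Θ q) (Θ q')).re = (star (q : ℍq) * (q' : ℍq)).re) :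
    IsLTS {v : MatH n | ∃ q : ↥Q, v = E22 hn (q : ℍq) + (2 : ℝ) • iotaPlus (Θ q)} :=
  stmt18_general n hn Q U hU hUorth Θ hrange hisom

end
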